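/- arXiv:2107.07347 — 6 statements merged into one kernel-verified Lean document; each statement's English description precedes it below -/
import Mathlib

section
/- Let T be a binary tree with leaf set, let b be a positive integer with |Leaves(T)| ≤ b, and let S = { v ∈ Leaves(T) : 2^{w_T(v)} ≤ 2b }. Then there exists a nonempty subset L ⊆ S such that max_{v∈L} 2^{w_T(v)} ≤ (4 + 2·log₂ b) · |L|. -/
/-!
By Kraft's equality the leaf weights satisfy `∑ 2^{-w} = 1`. Each of the at most `b` leaves with
`2^w > 2b` contributes less than `1/(2b)`, so the leaves in `S` carry mass at least `1/2`. The
weights in `S` take only the `log₂ b + 2` values `0, …, log₂ (2b)`, so by pigeonhole one value `k`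
carries mass at least `1/(2(log₂ b + 2))`; all leaves of weight `k` form the required `L`.
-/

/-- A finite binary tree in which every internal node has one or two children. -/
inductive BTree : Type
  | leaf : BTree
  | one : BTree → BTree
  | two : BTree → BTree → BTree

/-- The list of weights `w_T(v)` of the leaves `v` of `T`, where `w_T(v)` is the number of
ancestors of `v` in `T` that have two children. -/
def BTree.weights : BTree → List ℕ
  | .leaf => [0]
  | .one t => t.weights
  | .two l r => (l.weights ++ r.weights).map (· + 1)

theorem BTree.sum_inv_two_pow_weights (T : BTree) :
    (T.weights.map fun w => (2⁻¹ : ℝ) ^ w).sum = 1 := by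
  induction T with
  | leaf => simp [BTree.weights]
  | one t ih => simpa [BTree.weights] using ih
  | two l r ihl ihr =>
    simp only [BTree.weights, List.map_map, Function.comp_def, pow_succ, List.map_append,
      List.sum_append, List.sum_map_mul_right, ihl, ihr]
    norm_num

namespace Multiset

theorem half_le_sum_inv_two_pow_filter {M : Multiset ℕ} {b : ℕ} (hb : 0 < b)
    (hM : (M.map fun w => (2⁻¹ : ℝ) ^ w).sum = 1) (hcard : card M ≤ b) :
    1 / 2 ≤ ((M.filter fun w => 2 ^ w ≤ 2 * b).map fun w => (2⁻¹ : ℝ) ^ w).sum := by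
  set Sc := M.filter fun w => ¬ 2 ^ w ≤ 2 * b
  have hsplit : ((M.filter fun w => 2 ^ w ≤ 2 * b).map fun w => (2⁻¹ : ℝ) ^ w).sum
      + (Sc.map fun w => (2⁻¹ : ℝ) ^ w).sum = 1 := by
    rw [← sum_add, ← map_add, filter_add_not, hM]
  have hterm : ∀ x ∈ Sc.map fun w => (2⁻¹ : ℝ) ^ w, x ≤ 1 / (2 * b) := by
    simp only [mem_map, mem_filter, Sc]
    rintro _ ⟨w, ⟨-, hw⟩, rfl⟩
    have hw : (2 * b : ℝ) ≤ 2 ^ w := by exact_mod_cast (not_le.1 hw).le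
    rw [inv_pow, ← one_div]
    exact one_div_le_one_div_of_le (by positivity) hw
  have hcardSc : (card Sc : ℝ) ≤ b := by
    exact_mod_cast (card_le_card (filter_le _ M)).trans hcard
  have htail : (Sc.map fun w => (2⁻¹ : ℝ) ^ w).sum ≤ 1 / 2 := calc
    _ ≤ (card Sc : ℝ) * (1 / (2 * b)) := by
      simpa only [card_map, nsmul_eq_mul] using sum_le_card_nsmul _ _ hterm
    _ ≤ (b : ℝ) * (1 / (2 * b)) := by gcongr
    _ = 1 / 2 := by field_simp [(Nat.cast_pos.2 hb).ne']
  linarith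

theorem exists_two_pow_mul_le_mul_count {S : Multiset ℕ} {K : ℕ} {ε : ℝ}
    (hS : ∀ w ∈ S, w ≤ K) (hsum : ε ≤ (S.map fun w => (2⁻¹ : ℝ) ^ w).sum) :
    ∃ k, 2 ^ k * ε ≤ (K + 1) * S.count k := by
  have hsum_range : (S.map fun w => (2⁻¹ : ℝ) ^ w).sum
      = ∑ k ∈ Finset.range (K + 1), (S.count k : ℝ) * (2⁻¹ : ℝ) ^ k := by
    simp only [Finset.sum_multiset_map_count, nsmul_eq_mul]
    refine Finset.sum_subset (fun k hk => ?_) (fun k _ hk => ?_)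
    · exact Finset.mem_range_succ_iff.2 (hS k (mem_toFinset.1 hk))
    · simp [count_eq_zero.2 (fun h => hk (mem_toFinset.2 h))]
  obtain ⟨k, -, hk⟩ := Finset.exists_le_of_sum_le (s := Finset.range (K + 1))
    (f := fun _ => ε / (K + 1)) Finset.nonempty_range_add_one (by
      rw [← hsum_range, Finset.sum_const, Finset.card_range, nsmul_eq_mul, Nat.cast_succ,
        mul_div_cancel₀ _ (by positivity)]
      exact hsum)
  refine ⟨k, ?_⟩
  rw [div_le_iff₀ (by positivity), inv_pow] at hk
  have h2k : (0 : ℝ) < 2 ^ k := by positivity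
  calc 2 ^ k * ε ≤ 2 ^ k * (S.count k * (2 ^ k)⁻¹ * (K + 1)) := by gcongr
    _ = (K + 1) * S.count k := by field_simp

end Multiset

theorem two_mul_log_two_mul_add_one_le (b : ℕ) (hb : b ≠ 0) :
    2 * ((Nat.log 2 (2 * b) : ℝ) + 1) ≤ 4 + 2 * Real.logb 2 b := by
  rw [mul_comm 2 b, Nat.log_mul_base one_lt_two hb]
  have := Real.natLog_le_logb b 2
  push_cast at this ⊢
  linarith

/-- Fine-grained Kraft averaging: if `T` is a binary tree with at most `b` leaves and
`S = {v ∈ Leaves(T) : 2^{w_T(v)} ≤ 2b}`, then there is a nonempty subset `L ⊆ S` with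
`max_{v ∈ L} 2^{w_T(v)} ≤ (4 + 2 log₂ b) ⬝ |L|`. -/
theorem stmt_2 (T : BTree) (b : ℕ) (hb : 0 < b) (hcard : T.weights.length ≤ b) :
    ∃ L : Multiset ℕ,
      L ≤ Multiset.filter (fun w => 2 ^ w ≤ 2 * b) (T.weights : Multiset ℕ) ∧
      L ≠ 0 ∧
      ∀ w ∈ L, ((2 : ℝ) ^ w) ≤ (4 + 2 * Real.logb 2 (b : ℝ)) * (Multiset.card L : ℝ) := by
  set S := Multiset.filter (fun w => 2 ^ w ≤ 2 * b) (T.weights : Multiset ℕ)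
  have hmass : 1 / 2 ≤ (S.map fun w => (2⁻¹ : ℝ) ^ w).sum :=
    Multiset.half_le_sum_inv_two_pow_filter hb (by simpa using T.sum_inv_two_pow_weights)
      (by simpa using hcard)
  have hS : ∀ w ∈ S, w ≤ Nat.log 2 (2 * b) :=
    fun w hw => Nat.le_log_of_pow_le one_lt_two (Multiset.mem_filter.1 hw).2
  obtain ⟨k, hk⟩ := Multiset.exists_two_pow_mul_le_mul_count hS hmass
  have hcount : 0 < S.count k := by
    have : (0 : ℝ) < 2 ^ k * (1 / 2) := by positivity
    exact_mod_cast pos_of_mul_pos_right (this.trans_le hk) (by positivity)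
  refine ⟨Multiset.replicate (S.count k) k, Multiset.le_count_iff_replicate_le.1 le_rfl,
    Multiset.card_pos.1 (by rwa [Multiset.card_replicate]), fun w hw => ?_⟩
  rw [Multiset.eq_of_mem_replicate hw, Multiset.card_replicate]
  calc (2 : ℝ) ^ k ≤ 2 * ((Nat.log 2 (2 * b) : ℝ) + 1) * S.count k := by linarith
    _ ≤ _ := by gcongr; exact two_mul_log_two_mul_add_one_le b hb.ne'
end

section
/- If S ⊆ Leaves(T) satisfies Σ_{u∈S} 2^{-w_T(u)} ≥ 1/2 and |S| ≤ some finite bound, then there exists a nonempty subset L ⊆ S with max_{v∈L} 2^{w_T(v)} ≤ (8 + 4·log₂|S|)·|L|. -/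
/-!
Suppose no weight level `w` is populated heavily, i.e. `C · count w < 2 ^ w` for every `w ∈ S`,
where `n = |S|` and `C = 8 + 4 log₂ n`. Levels with `2 ^ w > 4n` carry Kraft mass at most
`n / 4n = 1/4` in total. Every occupied level has `2 ^ w > C ≥ 8`, so the levels with
`2 ^ w ≤ 4n` lie in `[4, log₂ n + 2]`: there are at most `log₂ n` of them, each carrying mass
below `1 / C`. The total mass is then below `1/4 + log₂ n / C < 1/2`. Hence some level `w`
satisfies `2 ^ w ≤ C · count w`, and `L` is the set of elements of `S` at that level.
-/

open Finset

lemma card_filter_eight_lt_two_pow_le_log (s : Finset ℕ) (n : ℕ) :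
    #{w ∈ s | 8 < 2 ^ w ∧ 2 ^ w ≤ 4 * n} ≤ Nat.log 2 n := by
  have hsub : {w ∈ s | 8 < 2 ^ w ∧ 2 ^ w ≤ 4 * n} ⊆ Icc 4 (Nat.log 2 n + 2) := by
    intro w hw
    obtain ⟨-, hlo, hhi⟩ := mem_filter.mp hw
    have h4 : 3 < w := (Nat.pow_lt_pow_iff_right one_lt_two).mp hlo
    have hsplit : 2 ^ w = 2 ^ (w - 2) * 4 := by
      rw [show 4 = 2 ^ 2 by rfl, ← pow_add, Nat.sub_add_cancel (by omega)]
    have hlog : w - 2 ≤ Nat.log 2 n := Nat.le_log_of_pow_le one_lt_two (by omega)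
    exact mem_Icc.mpr ⟨h4, by omega⟩
  have := card_le_card hsub
  rw [Nat.card_Icc] at this
  omega

lemma sum_filter_lt_two_pow_count_mul_inv_le (S : Multiset ℕ) {M : ℕ} (hM : 0 < M) :
    ∑ w ∈ S.toFinset with M < 2 ^ w, (S.count w : ℝ) * ((2 : ℝ) ^ w)⁻¹
      ≤ Multiset.card S / M := by
  calc ∑ w ∈ S.toFinset with M < 2 ^ w, (S.count w : ℝ) * ((2 : ℝ) ^ w)⁻¹
      ≤ ∑ w ∈ S.toFinset with M < 2 ^ w, (S.count w : ℝ) * (M : ℝ)⁻¹ := by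
        gcongr with w hw
        exact_mod_cast (mem_filter.mp hw).2.le
    _ ≤ ∑ w ∈ S.toFinset, (S.count w : ℝ) * (M : ℝ)⁻¹ :=
        sum_le_sum_of_subset_of_nonneg (filter_subset _ _) fun _ _ _ => by positivity
    _ = Multiset.card S / M := by
        rw [← sum_mul, ← Nat.cast_sum, Multiset.toFinset_sum_count_eq, div_eq_mul_inv]

lemma sum_count_mul_inv_two_pow_le_card_div {S : Multiset ℕ} {C : ℝ} (hC : 0 < C)
    (hS : ∀ w ∈ S, C * S.count w < 2 ^ w) {t : Finset ℕ} (ht : t ⊆ S.toFinset) :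
    ∑ w ∈ t, (S.count w : ℝ) * ((2 : ℝ) ^ w)⁻¹ ≤ #t / C := by
  have hterm : ∀ w ∈ t, (S.count w : ℝ) * ((2 : ℝ) ^ w)⁻¹ ≤ C⁻¹ := by
    intro w hw
    have hwS := hS w (Multiset.mem_toFinset.mp (ht hw))
    rw [← div_eq_mul_inv, div_le_iff₀ (by positivity), inv_mul_eq_div, le_div_iff₀ hC]
    linarith
  simpa [div_eq_mul_inv] using sum_le_card_nsmul t _ _ hterm

theorem Multiset.exists_two_pow_le_mul_count (S : Multiset ℕ)
    (hsum : (1 : ℝ) / 2 ≤ (S.map fun w => ((2 : ℝ) ^ w)⁻¹).sum) :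
    ∃ w ∈ S, (2 : ℝ) ^ w ≤ (8 + 4 * Real.logb 2 (Multiset.card S : ℝ)) * S.count w := by
  set n := Multiset.card S
  set C : ℝ := 8 + 4 * Real.logb 2 (n : ℝ)
  have hn : 1 ≤ n := by
    rw [Nat.one_le_iff_ne_zero, Ne, Multiset.card_eq_zero]
    rintro rfl
    norm_num at hsum
  have hlog : 0 ≤ Real.logb 2 (n : ℝ) := Real.logb_nonneg one_lt_two (by exact_mod_cast hn)
  have hC : 0 < C := by positivity
  by_contra! hsparse
  have height : ∀ w ∈ S, 8 < 2 ^ w := fun w hw => by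
    have hcount : (1 : ℝ) ≤ S.count w := by exact_mod_cast Multiset.one_le_count_iff_mem.mpr hw
    exact_mod_cast (show (8 : ℝ) < 2 ^ w by nlinarith [hsparse w hw])
  have hheavy : ∑ w ∈ S.toFinset with 2 ^ w ≤ 4 * n, (S.count w : ℝ) * ((2 : ℝ) ^ w)⁻¹
      ≤ Real.logb 2 n / C := by
    refine (sum_count_mul_inv_two_pow_le_card_div hC hsparse (filter_subset _ _)).trans ?_
    gcongr
    rw [Finset.filter_congr fun w hw =>
      (and_iff_right (height w (Multiset.mem_toFinset.mp hw))).symm]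
    exact (Nat.cast_le.mpr (card_filter_eight_lt_two_pow_le_log _ n)).trans
      (Real.natLog_le_logb n 2)
  have hlight : ∑ w ∈ S.toFinset with ¬2 ^ w ≤ 4 * n, (S.count w : ℝ) * ((2 : ℝ) ^ w)⁻¹
      ≤ 1 / 4 := by
    simp_rw [not_le]
    refine (sum_filter_lt_two_pow_count_mul_inv_le S (by omega)).trans_eq ?_
    show (n : ℝ) / ((4 * n : ℕ) : ℝ) = 1 / 4
    push_cast
    field_simp
  rw [Finset.sum_multiset_map_count,
    ← Finset.sum_filter_add_sum_filter_not _ (fun w => 2 ^ w ≤ 4 * n)] at hsum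
  simp only [nsmul_eq_mul] at hsum
  have hsmall : Real.logb 2 n / C < 1 / 4 := by
    rw [div_lt_iff₀ hC]
    linarith
  linarith

theorem stmt_3_general (S : Multiset ℕ)
    (hsum : (1 : ℝ) / 2 ≤ (S.map fun w => ((2 : ℝ) ^ w)⁻¹).sum) :
    ∃ L : Multiset ℕ, L ≤ S ∧ L ≠ 0 ∧
      ∀ w ∈ L,
        ((2 : ℝ) ^ w) ≤ (8 + 4 * Real.logb 2 (Multiset.card S : ℝ)) * (Multiset.card L : ℝ) := by
  obtain ⟨w, hwS, hw⟩ := Multiset.exists_two_pow_le_mul_count S hsum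
  refine ⟨Multiset.replicate (S.count w) w, Multiset.le_count_iff_replicate_le.mp le_rfl, ?_, ?_⟩
  · simpa [← Multiset.card_pos, Multiset.card_replicate, Multiset.count_pos] using hwS
  · intro v hv
    rwa [Multiset.eq_of_mem_replicate hv, Multiset.card_replicate]

/-- If `S ⊆ Leaves(T)` carries Kraft mass at least `1/2`, i.e. `∑_{u ∈ S} 2^{-w_T(u)} ≥ 1/2`,
then there is a nonempty `L ⊆ S` with `max_{v ∈ L} 2^{w_T(v)} ≤ (8 + 4 log₂|S|) ⬝ |L|`. -/
theorem stmt_3 (T : BTree) (S : Multiset ℕ) (hS : S ≤ (T.weights : Multiset ℕ))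
    (hsum : (1 : ℝ) / 2 ≤ (S.map fun w => ((2 : ℝ) ^ w)⁻¹).sum) :
    ∃ L : Multiset ℕ, L ≤ S ∧ L ≠ 0 ∧
      ∀ w ∈ L,
        ((2 : ℝ) ^ w) ≤ (8 + 4 * Real.logb 2 (Multiset.card S : ℝ)) * (Multiset.card L : ℝ) :=
  stmt_3_general S hsum
end

section
/- For n a power of two, a subtree T of the full binary tree T^full_n, and a leaf v of T with frequency label f, the one-dimensional adaptive aliasing filter defined in the Fourier domain by Ĝ_v(ξ) = 2^{-w_T(v)} · Π_{ℓ ∈ Anc(v,T)} (1 + e^{2πi(ξ-f)/2^{ℓ+1}}) satisfies Σ_{ξ ∈ [n]} |Ĝ_v(ξ)|² = n / 2^{w_T(v)}. -/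
open scoped Classical

noncomputable section

/-- `T` is a subtree of the full FFT binary tree `T^full_n` of depth `m` on the universe
`[n] = [2^m]`: nodes are pairs `(j, f)` of a level `j ≤ m` and a label `f ∈ [2^j]`;
`T` contains the root `(0, 0)` and is closed under taking parents (the parent of
`(j+1, f)` is `(j, f % 2^j)`; the right child of `(j, g)` is `(j+1, g)` and the left
child is `(j+1, g + 2^j)`). -/
def IsSubtree (m : ℕ) (T : Set (ℕ × ℕ)) : Prop :=
  (0, 0) ∈ T ∧ (∀ j f : ℕ, (j + 1, f) ∈ T → (j, f % 2 ^ j) ∈ T) ∧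
    ∀ j f : ℕ, (j, f) ∈ T → j ≤ m ∧ f < 2 ^ j

/-- `(j, f)` is a leaf of `T`: it belongs to `T` and none of its two children does. -/
def IsLeaf (T : Set (ℕ × ℕ)) (j f : ℕ) : Prop :=
  (j, f) ∈ T ∧ (j + 1, f) ∉ T ∧ (j + 1, f + 2 ^ j) ∉ T

/-- `Anc T j f`: the set of levels `ℓ < j` at which the ancestor `(ℓ, f % 2^ℓ)` of the
node `(j, f)` has two children in `T`.  Its cardinality is the weight `w_T(v)`. -/
def Anc (T : Set (ℕ × ℕ)) (j f : ℕ) : Finset ℕ :=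
  (Finset.range j).filter fun ℓ =>
    (ℓ + 1, f % 2 ^ ℓ) ∈ T ∧ (ℓ + 1, f % 2 ^ ℓ + 2 ^ ℓ) ∈ T

/-- The one-dimensional adaptive aliasing `(v, T)`-isolating filter in the Fourier domain:
`Ĝ_v(ξ) = 2^{-w_T(v)} ⬝ ∏_{ℓ ∈ Anc(v,T)} (1 + e^{2πi(ξ - f)/2^{ℓ+1}})`. -/
def filt (T : Set (ℕ × ℕ)) (j f ξ : ℕ) : ℂ :=
  (2 : ℂ) ^ (-((Anc T j f).card : ℤ)) *
    ∏ ℓ ∈ Anc T j f,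
      (1 + Complex.exp (2 * (Real.pi : ℂ) * Complex.I * ((ξ : ℂ) - (f : ℂ)) / 2 ^ (ℓ + 1)))

/-! Put `ω = e^{2πi/2^m}`. The factor of `Ĝ_v(ξ)` at level `ℓ` is `1 + ζ^{2^{m-1-ℓ}}` with
`ζ = ω^{ξ-f}`, so expanding the product gives `Ĝ_v(ξ) = 2^{-w} ∑_{S ⊆ Anc} ζ^{t(S)}` where
`t(S) = ∑_{ℓ ∈ S} 2^{m-1-ℓ}`. By uniqueness of binary expansions the exponents `t(S)` are distinct
and below `2^m`, so orthogonality of the characters `ξ ↦ ω^{ξk}` on `[2^m]` turns the energy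
into `2^{-2w} ⬝ 2^m ⬝ #{S ⊆ Anc} = 2^m / 2^w`. -/

open Finset Real ComplexConjugate

lemma IsPrimitiveRoot.sum_pow_mul_conj_pow {ω : ℂ} {N : ℕ} (hω : IsPrimitiveRoot ω N)
    {a b : ℕ} (ha : a < N) (hb : b < N) :
    ∑ ξ ∈ range N, ω ^ (ξ * a) * conj (ω ^ (ξ * b)) = if a = b then (N : ℂ) else 0 := by
  have hconj : conj ω = ω⁻¹ := (RCLike.inv_eq_conj (hω.norm'_eq_one (by omega))).symm
  set u := ω ^ a * (ω ^ b)⁻¹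
  have hterm : ∀ ξ, ω ^ (ξ * a) * conj (ω ^ (ξ * b)) = u ^ ξ := fun ξ => by
    rw [map_pow, hconj, mul_pow, ← inv_pow, ← pow_mul, ← pow_mul, mul_comm a, mul_comm b]
  simp only [hterm]
  split_ifs with hab
  · simp [u, hab, hω.ne_zero (by omega)]
  · have hu1 : u ≠ 1 := fun h => hab <| hω.pow_inj ha hb <|
      by rwa [mul_inv_eq_one₀ (pow_ne_zero _ (hω.ne_zero (by omega)))] at h
    have huN : u ^ N = 1 := by
      rw [mul_pow, inv_pow, ← pow_mul, ← pow_mul, mul_comm a, mul_comm b, pow_mul, pow_mul,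
        hω.pow_eq_one]
      simp
    rw [geom_sum_eq hu1, huN, sub_self, zero_div]

lemma IsPrimitiveRoot.sum_norm_sq_sum_pow {ι : Type*} {ω : ℂ} {N : ℕ} (hω : IsPrimitiveRoot ω N)
    {s : Finset ι} {e : ι → ℕ} (he : Set.InjOn e s) (heN : ∀ i ∈ s, e i < N) (c : ι → ℂ) :
    ∑ ξ ∈ range N, ‖∑ i ∈ s, c i * ω ^ (ξ * e i)‖ ^ 2 = N * ∑ i ∈ s, ‖c i‖ ^ 2 := by
  classical
  apply Complex.ofReal_injective
  push_cast
  simp_rw [← Complex.mul_conj', map_sum, map_mul, sum_mul_sum]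
  calc ∑ ξ ∈ range N, ∑ i ∈ s, ∑ j ∈ s,
        c i * ω ^ (ξ * e i) * (conj (c j) * conj (ω ^ (ξ * e j)))
      = ∑ i ∈ s, ∑ j ∈ s,
          c i * conj (c j) * ∑ ξ ∈ range N, ω ^ (ξ * e i) * conj (ω ^ (ξ * e j)) := by
        rw [sum_comm]
        refine sum_congr rfl fun i _ => ?_
        rw [sum_comm]
        simp_rw [mul_sum]
        refine sum_congr rfl fun j _ => sum_congr rfl fun ξ _ => by ring
    _ = ∑ i ∈ s, ∑ j ∈ s, c i * conj (c j) * if i = j then (N : ℂ) else 0 := by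
        refine sum_congr rfl fun i hi => sum_congr rfl fun j hj => ?_
        simp only [hω.sum_pow_mul_conj_pow (heN i hi) (heN j hj), he.eq_iff hi hj]
    _ = N * ∑ i ∈ s, c i * conj (c i) := by
        simp [mul_sum, mul_comm]

lemma Finset.injOn_sum_pow_powerset {b : ℕ} (hb : 2 ≤ b) {A : Finset ℕ} {g : ℕ → ℕ}
    (hg : Set.InjOn g A) : Set.InjOn (fun S => ∑ ℓ ∈ S, b ^ g ℓ) A.powerset := by
  intro S hS S' hS' h
  have hS : S ⊆ A := mem_powerset.1 hS
  have hS' : S' ⊆ A := mem_powerset.1 hS'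
  simp only at h
  rw [← sum_image (hg.mono hS), ← sum_image (hg.mono hS')] at h
  exact image_injOn_powerset_of_injOn hg (mem_powerset.2 hS) (mem_powerset.2 hS')
    (geomSum_injective hb h)

lemma Finset.sum_pow_lt_pow {b m : ℕ} (hb : 2 ≤ b) {S : Finset ℕ} {g : ℕ → ℕ}
    (hg : Set.InjOn g S) (hgm : ∀ ℓ ∈ S, g ℓ < m) : ∑ ℓ ∈ S, b ^ g ℓ < b ^ m := by
  rw [← sum_image hg]
  exact Nat.geomSum_lt hb (by simpa using hgm)

lemma Finset.prod_one_add_pow {R ι : Type*} [CommSemiring R] (z : R) (A : Finset ι) (e : ι → ℕ) :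
    ∏ ℓ ∈ A, (1 + z ^ e ℓ) = ∑ S ∈ A.powerset, z ^ ∑ ℓ ∈ S, e ℓ := by
  simp only [prod_one_add, prod_pow_eq_pow_sum]

open Complex in
lemma Complex.exp_two_pi_I_div_two_pow (x : ℂ) {k m : ℕ} (hkm : k ≤ m) :
    exp (2 * π * I * x / 2 ^ k) = exp (2 * π * I * x / 2 ^ m) ^ 2 ^ (m - k) := by
  obtain ⟨d, rfl⟩ := Nat.exists_eq_add_of_le hkm
  rw [← exp_nat_mul, Nat.add_sub_cancel_left, pow_add]
  congr 1
  push_cast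
  field_simp

open Complex in
lemma Complex.exp_two_pi_I_mul_sub_div (ξ f : ℕ) (N : ℂ) :
    exp (2 * π * I * ((ξ : ℂ) - f) / N) =
      exp (2 * π * I / N) ^ ξ * (exp (2 * π * I / N) ^ f)⁻¹ := by
  rw [← exp_nat_mul, ← exp_nat_mul, ← exp_neg, ← exp_add]
  ring_nf

lemma IsSubtree.lt_of_mem_anc {m : ℕ} {T : Set (ℕ × ℕ)} (hT : IsSubtree m T) {j f : ℕ}
    (hv : (j, f) ∈ T) : ∀ ℓ ∈ Anc T j f, ℓ < m := fun _ hℓ =>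
  (mem_range.1 (mem_filter.1 hℓ).1).trans_le (hT.2.2 j f hv).1

open Complex in
lemma filt_eq_sum_pow {m : ℕ} {T : Set (ℕ × ℕ)} {j f : ℕ} (hA : ∀ ℓ ∈ Anc T j f, ℓ < m)
    (ξ : ℕ) :
    filt T j f ξ = 2 ^ (-((Anc T j f).card : ℤ)) *
      ∑ S ∈ (Anc T j f).powerset,
        ((exp (2 * π * I / 2 ^ m) ^ f)⁻¹) ^ (∑ ℓ ∈ S, 2 ^ (m - (ℓ + 1))) *
          exp (2 * π * I / 2 ^ m) ^ (ξ * ∑ ℓ ∈ S, 2 ^ (m - (ℓ + 1))) := by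
  rw [filt, prod_congr rfl fun ℓ hℓ => by
    rw [exp_two_pi_I_div_two_pow _ (Nat.add_one_le_of_lt (hA ℓ hℓ))], prod_one_add_pow]
  rw [exp_two_pi_I_mul_sub_div]
  congr 1
  refine sum_congr rfl fun S _ => by rw [mul_pow, pow_mul, mul_comm]

/-- Energy of an adaptive aliasing filter: for `n = 2^m` a power of two, a subtree `T` of
`T^full_n` and a leaf `v = (j, f)` of `T`,
`∑_{ξ ∈ [n]} |Ĝ_v(ξ)|² = n / 2^{w_T(v)}`. -/
theorem stmt_5 (m : ℕ) (T : Set (ℕ × ℕ)) (hT : IsSubtree m T) (j f : ℕ)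
    (hleaf : IsLeaf T j f) :
    ∑ ξ ∈ Finset.range (2 ^ m), ‖filt T j f ξ‖ ^ 2
      = (2 ^ m : ℝ) / 2 ^ (Anc T j f).card := by
  have hA := hT.lt_of_mem_anc hleaf.1
  have hω : IsPrimitiveRoot (Complex.exp (2 * π * Complex.I / 2 ^ m)) (2 ^ m) := by
    exact_mod_cast Complex.isPrimitiveRoot_exp (2 ^ m) (by positivity)
  have hg : Set.InjOn (fun ℓ => m - (ℓ + 1)) (Anc T j f) := fun a ha b hb h => by
    have := hA a ha; have := hA b hb; simp only at h; omega
  simp_rw [filt_eq_sum_pow hA, norm_mul, mul_pow, ← mul_sum]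
  rw [hω.sum_norm_sq_sum_pow (injOn_sum_pow_powerset le_rfl hg) fun S hS =>
    sum_pow_lt_pow le_rfl (hg.mono (mem_powerset.1 hS)) fun ℓ hℓ => by
      have := hA ℓ (mem_powerset.1 hS hℓ); omega]
  simp only [norm_pow, norm_inv, hω.norm'_eq_one (by positivity), one_pow, inv_one,
    sum_const, card_powerset, Complex.norm_ofNat, zpow_neg, zpow_natCast]
  push_cast
  field_simp
  ring
end
end

section
/- Unit partition of energy in one dimension: for n a power of two and any subtree T of T^full_n, with Ĝ_v the (v,T)-isolating filter Ĝ_v(ξ) = 2^{-w_T(v)} Π_{ℓ∈Anc(v,T)}(1 + e^{2πi(ξ−f_v)/2^{ℓ+1}}), for every ξ ∈ [n] one has Σ_{v ∈ Leaves(T)} |Ĝ_v(ξ)|² = 1. -/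
open scoped Classical

noncomputable section

/-! Energy is conserved from one level of the tree to the next. At a node `v = (j, f)` with two
children, the filters of the children are `Ĝ_v ⬝ (1 ± z)/2` with `|z| = 1`: adding `2^j` to the
label flips the sign of the new factor `z` and leaves the older factors unchanged, since the
factor of level `ℓ` depends on the label only modulo `2^{ℓ+1}`. By the parallelogram law the
children's energies add up to `|Ĝ_v|²`; a node with one child passes its filter on unchanged.
Telescoping over the levels, the leaves carry the energy `|Ĝ_root|² = 1` of the root. -/

section

open Finset

variable {T : Set (ℕ × ℕ)} {m : ℕ}

def phase (ξ f ℓ : ℕ) : ℂ :=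
  Complex.exp (2 * (Real.pi : ℂ) * Complex.I * ((ξ : ℂ) - (f : ℂ)) / 2 ^ (ℓ + 1))

lemma norm_phase (ξ f ℓ : ℕ) : ‖phase ξ f ℓ‖ = 1 := by
  rw [phase, show 2 * (Real.pi : ℂ) * Complex.I * ((ξ : ℂ) - (f : ℂ)) / 2 ^ (ℓ + 1)
      = ((2 * Real.pi * ((ξ : ℝ) - f) / 2 ^ (ℓ + 1) : ℝ) : ℂ) * Complex.I by push_cast; ring]
  exact Complex.norm_exp_ofReal_mul_I _

lemma phase_congr {ξ c f ℓ : ℕ} (h : c ≡ f [MOD 2 ^ (ℓ + 1)]) : phase ξ c ℓ = phase ξ f ℓ := by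
  obtain ⟨k, hk⟩ := Nat.modEq_iff_dvd.mp h
  have hk' : (f : ℂ) - c = 2 ^ (ℓ + 1) * k := by exact_mod_cast hk
  rw [phase, phase, Complex.exp_eq_exp_iff_exists_int,
    show (ξ : ℂ) - c = ξ - f + 2 ^ (ℓ + 1) * k by linear_combination hk']
  refine ⟨k, ?_⟩
  field_simp

lemma phase_add_two_pow_self (ξ f j : ℕ) : phase ξ (f + 2 ^ j) j = -phase ξ f j := by
  have harg : 2 * (Real.pi : ℂ) * Complex.I * ((ξ : ℂ) - ((f + 2 ^ j : ℕ) : ℂ)) / 2 ^ (j + 1)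
      = 2 * (Real.pi : ℂ) * Complex.I * ((ξ : ℂ) - f) / 2 ^ (j + 1) - Real.pi * Complex.I := by
    push_cast
    field_simp
    ring
  rw [phase, phase, harg, Complex.exp_sub, Complex.exp_pi_mul_I, div_neg, div_one]

lemma filt_eq_prod (T : Set (ℕ × ℕ)) (j f ξ : ℕ) :
    filt T j f ξ = ∏ ℓ ∈ Anc T j f, (1 + phase ξ f ℓ) / 2 := by
  rw [filt, prod_div_distrib, prod_const, zpow_neg, zpow_natCast, inv_mul_eq_div]
  rfl

def HasTwoChildren (T : Set (ℕ × ℕ)) (j f : ℕ) : Prop :=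
  (j + 1, f) ∈ T ∧ (j + 1, f + 2 ^ j) ∈ T

lemma Anc_succ (T : Set (ℕ × ℕ)) (j c : ℕ) : Anc T (j + 1) c =
    if HasTwoChildren T j (c % 2 ^ j) then insert j (Anc T j c) else Anc T j c := by
  rw [Anc, range_add_one, filter_insert]
  exact if_congr Iff.rfl rfl rfl

lemma self_notMem_Anc (T : Set (ℕ × ℕ)) (j f : ℕ) : j ∉ Anc T j f := by
  simp [Anc]

lemma lt_of_mem_Anc {j f ℓ : ℕ} (h : ℓ ∈ Anc T j f) : ℓ < j :=
  mem_range.mp (mem_filter.mp h).1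

lemma Anc_congr (T : Set (ℕ × ℕ)) {j c f : ℕ} (h : c ≡ f [MOD 2 ^ j]) :
    Anc T j c = Anc T j f := by
  refine filter_congr fun ℓ hℓ => ?_
  rw [(h.of_dvd (pow_dvd_pow 2 (mem_range.mp hℓ).le) : c % 2 ^ ℓ = f % 2 ^ ℓ)]

lemma filt_congr (T : Set (ℕ × ℕ)) {j c f : ℕ} (ξ : ℕ) (h : c ≡ f [MOD 2 ^ j]) :
    filt T j c ξ = filt T j f ξ := by
  rw [filt_eq_prod, filt_eq_prod, Anc_congr T h]
  refine prod_congr rfl fun ℓ hℓ => ?_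
  rw [phase_congr (h.of_dvd (pow_dvd_pow 2 (lt_of_mem_Anc hℓ)))]

lemma filt_succ (T : Set (ℕ × ℕ)) (j c ξ : ℕ) : filt T (j + 1) c ξ =
    if HasTwoChildren T j (c % 2 ^ j) then filt T j c ξ * ((1 + phase ξ c j) / 2)
    else filt T j c ξ := by
  rw [filt_eq_prod, filt_eq_prod, Anc_succ]
  split_ifs
  · rw [prod_insert (self_notMem_Anc T j c), mul_comm]
  · rfl

lemma filt_succ_self {j f : ℕ} (ξ : ℕ) (hf : f < 2 ^ j) : filt T (j + 1) f ξ =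
    if HasTwoChildren T j f then filt T j f ξ * ((1 + phase ξ f j) / 2) else filt T j f ξ := by
  rw [filt_succ, Nat.mod_eq_of_lt hf]

lemma filt_succ_add_two_pow {j f : ℕ} (ξ : ℕ) (hf : f < 2 ^ j) : filt T (j + 1) (f + 2 ^ j) ξ =
    if HasTwoChildren T j f then filt T j f ξ * ((1 - phase ξ f j) / 2) else filt T j f ξ := by
  have hmod : f + 2 ^ j ≡ f [MOD 2 ^ j] := Nat.add_modEq_right
  rw [filt_succ, filt_congr T ξ hmod, phase_add_two_pow_self, hmod, Nat.mod_eq_of_lt hf,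
    sub_eq_add_neg]

lemma norm_sq_mul_one_add_add_norm_sq_mul_one_sub (c z : ℂ) (hz : ‖z‖ = 1) :
    ‖c * ((1 + z) / 2)‖ ^ 2 + ‖c * ((1 - z) / 2)‖ ^ 2 = ‖c‖ ^ 2 := by
  have h := parallelogram_law_with_norm ℝ (1 : ℂ) z
  rw [norm_one, hz] at h
  simp only [norm_mul, norm_div, Complex.norm_two, mul_pow, div_pow]
  linear_combination ‖c‖ ^ 2 / 4 * h

def nodeEnergy (T : Set (ℕ × ℕ)) (ξ k f : ℕ) : ℝ :=
  if (k, f) ∈ T then ‖filt T k f ξ‖ ^ 2 else 0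

def leafEnergy (T : Set (ℕ × ℕ)) (ξ k f : ℕ) : ℝ :=
  if IsLeaf T k f then ‖filt T k f ξ‖ ^ 2 else 0

lemma nodeEnergy_children (hT : IsSubtree m T) (ξ : ℕ) {k f : ℕ} (hf : f < 2 ^ k) :
    nodeEnergy T ξ (k + 1) f + nodeEnergy T ξ (k + 1) (f + 2 ^ k) =
      nodeEnergy T ξ k f - leafEnergy T ξ k f := by
  by_cases hv : (k, f) ∈ T
  · rw [nodeEnergy, nodeEnergy, nodeEnergy, leafEnergy, filt_succ_self ξ hf,
      filt_succ_add_two_pow ξ hf, if_pos hv]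
    by_cases h₁ : (k + 1, f) ∈ T <;> by_cases h₂ : (k + 1, f + 2 ^ k) ∈ T <;>
      simp only [HasTwoChildren, IsLeaf, hv, h₁, h₂, and_self, and_true, and_false,
        not_true_eq_false, not_false_eq_true, if_true, if_false, sub_zero, sub_self, zero_add,
        add_zero]
    exact norm_sq_mul_one_add_add_norm_sq_mul_one_sub _ _ (norm_phase ξ f k)
  · have hparent : ∀ c, c % 2 ^ k = f → (k + 1, c) ∉ T := fun c hc h => hv (hc ▸ hT.2.1 k c h)
    simp [nodeEnergy, leafEnergy, IsLeaf, hv, hparent f (Nat.mod_eq_of_lt hf),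
      hparent (f + 2 ^ k) (by rw [Nat.add_mod_right, Nat.mod_eq_of_lt hf])]

def levelEnergy (T : Set (ℕ × ℕ)) (ξ k : ℕ) : ℝ :=
  ∑ f ∈ range (2 ^ k), nodeEnergy T ξ k f

lemma levelEnergy_succ (hT : IsSubtree m T) (ξ k : ℕ) :
    levelEnergy T ξ (k + 1) = levelEnergy T ξ k - ∑ f ∈ range (2 ^ k), leafEnergy T ξ k f := by
  rw [levelEnergy, levelEnergy, pow_succ, mul_two, sum_range_add, ← sum_add_distrib,
    ← sum_sub_distrib]
  refine sum_congr rfl fun f hf => ?_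
  rw [add_comm (2 ^ k) f, nodeEnergy_children hT ξ (mem_range.mp hf)]

lemma levelEnergy_zero (hT : IsSubtree m T) (ξ : ℕ) : levelEnergy T ξ 0 = 1 := by
  simp [levelEnergy, nodeEnergy, hT.1, filt_eq_prod, Anc, filter_singleton]

lemma levelEnergy_of_lt (hT : IsSubtree m T) (ξ : ℕ) {k : ℕ} (hk : m < k) :
    levelEnergy T ξ k = 0 :=
  sum_eq_zero fun f _ => if_neg fun h => (hT.2.2 k f h).1.not_gt hk

lemma sum_leafEnergy (hT : IsSubtree m T) (ξ : ℕ) :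
    ∑ k ∈ range (m + 1), ∑ f ∈ range (2 ^ k), leafEnergy T ξ k f = 1 := by
  calc ∑ k ∈ range (m + 1), ∑ f ∈ range (2 ^ k), leafEnergy T ξ k f
      = ∑ k ∈ range (m + 1), (levelEnergy T ξ k - levelEnergy T ξ (k + 1)) :=
        sum_congr rfl fun k _ => by rw [levelEnergy_succ hT, sub_sub_cancel]
    _ = levelEnergy T ξ 0 - levelEnergy T ξ (m + 1) := sum_range_sub' _ _
    _ = 1 := by rw [levelEnergy_zero hT, levelEnergy_of_lt hT ξ m.lt_succ_self, sub_zero]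

lemma sum_leaves {M : Type*} [AddCommMonoid M] (hT : IsSubtree m T) {L : Finset (ℕ × ℕ)}
    (hL : ∀ p : ℕ × ℕ, p ∈ L ↔ IsLeaf T p.1 p.2) (g : ℕ → ℕ → M) :
    ∑ p ∈ L, g p.1 p.2 =
      ∑ k ∈ range (m + 1), ∑ f ∈ range (2 ^ k), if IsLeaf T k f then g k f else 0 := by
  have hbound : ∀ p ∈ L, p.1 ≤ m ∧ p.2 < 2 ^ p.1 := fun p hp => hT.2.2 _ _ ((hL p).mp hp).1
  rw [← sum_fiberwise_of_maps_to (g := Prod.fst) (t := range (m + 1))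
    fun p hp => mem_range.mpr (Nat.lt_succ_of_le (hbound p hp).1)]
  refine sum_congr rfl fun k _ => ?_
  rw [← sum_filter]
  refine sum_nbij' Prod.snd (Prod.mk k) ?_ ?_ ?_ ?_ ?_
  · intro p hp
    obtain ⟨hpL, rfl⟩ := mem_filter.mp hp
    exact mem_filter.mpr ⟨mem_range.mpr (hbound p hpL).2, (hL p).mp hpL⟩
  · intro f hf
    exact mem_filter.mpr ⟨(hL (k, f)).mpr (mem_filter.mp hf).2, rfl⟩
  · intro p hp
    exact Prod.ext (mem_filter.mp hp).2.symm rfl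
  · exact fun _ _ => rfl
  · intro p hp
    rw [(mem_filter.mp hp).2]

end

theorem stmt_7_general (m : ℕ) (T : Set (ℕ × ℕ)) (hT : IsSubtree m T)
    (L : Finset (ℕ × ℕ)) (hL : ∀ p : ℕ × ℕ, p ∈ L ↔ IsLeaf T p.1 p.2)
    (ξ : ℕ) :
    ∑ p ∈ L, ‖filt T p.1 p.2 ξ‖ ^ 2 = 1 := by
  rw [sum_leaves hT hL fun k f => ‖filt T k f ξ‖ ^ 2]
  exact sum_leafEnergy hT ξ

/-- Unit partition of energy in one dimension: for `n = 2^m` a power of two, any subtree `T`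
of `T^full_n` with set of leaves `L`, and every `ξ ∈ [n]`,
`∑_{v ∈ Leaves(T)} |Ĝ_v(ξ)|² = 1`. -/
theorem stmt_7 (m : ℕ) (T : Set (ℕ × ℕ)) (hT : IsSubtree m T)
    (L : Finset (ℕ × ℕ)) (hL : ∀ p : ℕ × ℕ, p ∈ L ↔ IsLeaf T p.1 p.2)
    (ξ : ℕ) (hξ : ξ < 2 ^ m) :
    ∑ p ∈ L, ‖filt T p.1 p.2 ξ‖ ^ 2 = 1 :=
  stmt_7_general m T hT L hL ξ
end
end

section
/- In the Orthogonal-Vectors-to-Fourier reduction, with t_j = Σ_{r∈[d]} a_j(r)·M^{rq} and f_j = Σ_{r∈[d]} b_j(r)·N/M^{rq+1} where N = M^{2dq}, the Fourier coefficient of the indicator vector x of {t₀,…,t_{k−1}} at frequency f_j equals x̂_{f_j} = Σ_{ℓ∈[k]} exp(−2πi·(⟨a_ℓ, b_j⟩/M + ξ_{ℓ,j})) for real error terms ξ_{ℓ,j} with |ξ_{ℓ,j}| ≤ C(d,2)·M^{−q−1}, where C(d,2) = d(d−1)/2. -/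
/-! Expanding `f t / N` gives the double sum over pairs `(r, r')` of `b(r) a(r') M^{r'q - rq - 1}`.
The pairs with `r < r'` contribute integers, which `exp(-2πi ·)` does not see; the diagonal
contributes `⟨a, b⟩ / M`; each of the `C(d,2)` pairs with `r' < r` contributes a nonnegative real
of size at most `M^{-q-1}`, and these make up the error `ξ`. -/

noncomputable section

/-- In the OV-to-Fourier reduction, the frequency built from `b ∈ {0,1}^d` is
`f = ∑_{r ∈ [d]} b(r) ⬝ N / M^{rq+1}` where `N = M^{2dq}`. -/
def freqC (d M q : ℕ) (b : Fin d → ℕ) : ℂ :=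
  ∑ r : Fin d, (b r : ℂ) * (M : ℂ) ^ (2 * d * q) / (M : ℂ) ^ ((r : ℕ) * q + 1)

/-- In the OV-to-Fourier reduction, the time point built from `a ∈ {0,1}^d` is
`t = ∑_{r ∈ [d]} a(r) ⬝ M^{rq}`. -/
def timeC (d M q : ℕ) (a : Fin d → ℕ) : ℂ :=
  ∑ r : Fin d, (a r : ℂ) * (M : ℂ) ^ ((r : ℕ) * q)

open Finset

theorem Finset.sum_eq_sum_Iio_add_add_sum_Ioi {α M : Type*} [AddCommMonoid M] [Fintype α]
    [LinearOrder α] [LocallyFiniteOrderBot α] [LocallyFiniteOrderTop α] (f : α → M) (r : α) :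
    ∑ x, f x = ∑ x ∈ Iio r, f x + f r + ∑ x ∈ Ioi r, f x := by
  rw [sum_Iio_add_eq_sum_Iic, ← sum_filter_add_sum_filter_not univ (· ≤ r)]
  congr 2 <;> ext x <;> simp

theorem Fin.sum_univ_val_cast (d : ℕ) : ∑ r : Fin d, ((r : ℕ) : ℝ) = d * (d - 1) / 2 := by
  rw [Fin.sum_univ_eq_sum_range (fun i => (i : ℝ))]
  induction d with
  | zero => simp
  | succ n ih => rw [sum_range_succ, ih]; push_cast; ring

theorem Complex.exp_neg_two_pi_I_mul_add_natCast (z : ℂ) (n : ℕ) :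
    exp (-(2 * Real.pi * I) * (z + n)) = exp (-(2 * Real.pi * I) * z) := by
  rw [mul_add, exp_add, show -(2 * Real.pi * I) * (n : ℂ) = ((-n : ℤ) : ℂ) * (2 * Real.pi * I) by
    push_cast; ring, exp_int_mul_two_pi_mul_I, mul_one]

namespace OVFourier

variable {d : ℕ} (M q : ℕ) (a b : Fin d → ℕ)

def phaseTerm (r r' : Fin d) : ℝ :=
  b r * a r' * ((M : ℝ) ^ ((r' : ℕ) * q) / (M : ℝ) ^ ((r : ℕ) * q + 1))

def phaseError : ℝ :=
  ∑ r, ∑ r' ∈ Iio r, phaseTerm M q a b r r'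

variable {M q a b}

theorem freqC_mul_timeC_div (hM : M ≠ 0) :
    freqC d M q b * timeC d M q a / (M : ℂ) ^ (2 * d * q)
      = ((∑ r, ∑ r', phaseTerm M q a b r r' : ℝ) : ℂ) := by
  have hM' : (M : ℂ) ≠ 0 := Nat.cast_ne_zero.mpr hM
  simp only [freqC, timeC, phaseTerm, sum_mul_sum, sum_div, Complex.ofReal_sum]
  refine sum_congr rfl fun r _ => sum_congr rfl fun r' _ => ?_
  push_cast
  field_simp

theorem phaseTerm_self (hM : M ≠ 0) (r : Fin d) : phaseTerm M q a b r r = a r * b r / M := by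
  have hM' : (M : ℝ) ≠ 0 := Nat.cast_ne_zero.mpr hM
  rw [phaseTerm, pow_succ]
  field_simp

theorem phaseTerm_of_lt (hM : M ≠ 0) (hq : 1 ≤ q) {r r' : Fin d} (h : r < r') :
    phaseTerm M q a b r r' = ((b r * a r' * M ^ ((r' : ℕ) * q - ((r : ℕ) * q + 1)) : ℕ) : ℝ) := by
  have hle : (r : ℕ) * q + 1 ≤ (r' : ℕ) * q := by
    have := Nat.mul_le_mul_right q (Fin.lt_def.mp h)
    rw [Nat.succ_mul] at this
    omega
  rw [phaseTerm, div_eq_mul_inv, ← pow_sub₀ _ (Nat.cast_ne_zero.mpr hM) hle]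
  push_cast
  ring

theorem phaseTerm_nonneg (r r' : Fin d) : 0 ≤ phaseTerm M q a b r r' := by
  unfold phaseTerm
  positivity

theorem phaseTerm_le_of_lt (hM : 1 ≤ M) {r r' : Fin d} (h : r' < r) (ha : a r' ≤ 1)
    (hb : b r ≤ 1) : phaseTerm M q a b r r' ≤ ((M : ℝ) ^ (q + 1))⁻¹ := by
  have hM' : (1 : ℝ) ≤ M := by exact_mod_cast hM
  have hpow : (M : ℝ) ^ ((r' : ℕ) * q) / (M : ℝ) ^ ((r : ℕ) * q + 1) ≤ ((M : ℝ) ^ (q + 1))⁻¹ := by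
    rw [div_le_iff₀ (by positivity), inv_mul_eq_div, le_div_iff₀ (by positivity), ← pow_add]
    refine pow_le_pow_right₀ hM' ?_
    have := Nat.mul_le_mul_right q (Fin.lt_def.mp h)
    rw [Nat.succ_mul] at this
    omega
  calc phaseTerm M q a b r r'
      ≤ 1 * 1 * ((M : ℝ) ^ (q + 1))⁻¹ := by
        unfold phaseTerm
        gcongr
        exacts [mod_cast hb, mod_cast ha]
    _ = ((M : ℝ) ^ (q + 1))⁻¹ := by ring

theorem sum_phaseTerm_eq (hM : M ≠ 0) (hq : 1 ≤ q) :
    ∃ U : ℕ, ∑ r, ∑ r', phaseTerm M q a b r r'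
      = ((∑ r, a r * b r : ℕ) : ℝ) / M + phaseError M q a b + U := by
  have hdiag : ∑ r, phaseTerm M q a b r r = ((∑ r, a r * b r : ℕ) : ℝ) / M := by
    push_cast
    rw [sum_div]
    exact sum_congr rfl fun r _ => phaseTerm_self hM r
  have hupper : ∑ r, ∑ r' ∈ Ioi r, phaseTerm M q a b r r'
      = ((∑ r, ∑ r' ∈ Ioi r, b r * a r' * M ^ ((r' : ℕ) * q - ((r : ℕ) * q + 1)) : ℕ) : ℝ) := by
    simp only [Nat.cast_sum]
    exact sum_congr rfl fun r _ => sum_congr rfl fun r' hr' => phaseTerm_of_lt hM hq (mem_Ioi.mp hr')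
  exact ⟨_, by
    rw [sum_congr rfl fun r _ => sum_eq_sum_Iio_add_add_sum_Ioi (phaseTerm M q a b r) r,
      sum_add_distrib, sum_add_distrib, hdiag, hupper, phaseError,
      add_comm (∑ r, ∑ r' ∈ Iio r, _)]⟩

theorem phaseError_nonneg : 0 ≤ phaseError M q a b :=
  sum_nonneg fun _ _ => sum_nonneg fun _ _ => phaseTerm_nonneg _ _

theorem abs_phaseError_le (hM : 1 ≤ M) (ha : ∀ r, a r ≤ 1) (hb : ∀ r, b r ≤ 1) :
    |phaseError M q a b| ≤ (d : ℝ) * ((d : ℝ) - 1) / 2 * ((M : ℝ) ^ (q + 1))⁻¹ := by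
  rw [abs_of_nonneg phaseError_nonneg]
  calc phaseError M q a b
      ≤ ∑ r : Fin d, ∑ _r' ∈ Iio r, ((M : ℝ) ^ (q + 1))⁻¹ :=
        sum_le_sum fun r _ => sum_le_sum fun r' hr' =>
          phaseTerm_le_of_lt hM (mem_Iio.mp hr') (ha r') (hb r)
    _ = ∑ r : Fin d, ((r : ℕ) : ℝ) * ((M : ℝ) ^ (q + 1))⁻¹ := by simp [Fin.card_Iio]
    _ = (d : ℝ) * ((d : ℝ) - 1) / 2 * ((M : ℝ) ^ (q + 1))⁻¹ := by
        rw [← sum_mul, Fin.sum_univ_val_cast]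

end OVFourier

/-- In the Orthogonal-Vectors-to-Fourier reduction, with `t_ℓ = ∑_r a_ℓ(r) M^{rq}` and
`f = ∑_r b(r) N / M^{rq+1}` where `N = M^{2dq}`, the Fourier coefficient of the indicator
vector of `{t₀, …, t_{k−1}}` at frequency `f`, namely `∑_ℓ e^{−2πi f t_ℓ / N}`, equals
`∑_ℓ exp(−2πi (⟨a_ℓ, b⟩ / M + ξ_ℓ))` for real error terms `ξ_ℓ` with
`|ξ_ℓ| ≤ C(d,2) ⬝ M^{−q−1}`, where `C(d,2) = d(d−1)/2`. -/
theorem stmt_13 (k d M q : ℕ) (hM : 2 ≤ M) (hq : 1 ≤ q)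
    (a : Fin k → Fin d → ℕ) (b : Fin d → ℕ)
    (ha : ∀ ℓ r, a ℓ r ≤ 1) (hb : ∀ r, b r ≤ 1) :
    ∃ ξ : Fin k → ℝ,
      (∀ ℓ, |ξ ℓ| ≤ (d : ℝ) * ((d : ℝ) - 1) / 2 * ((M : ℝ) ^ (q + 1))⁻¹) ∧
        ∑ ℓ, Complex.exp (-(2 * (Real.pi : ℂ) * Complex.I) *
            (freqC d M q b * timeC d M q (a ℓ) / (M : ℂ) ^ (2 * d * q)))
          = ∑ ℓ, Complex.exp (-(2 * (Real.pi : ℂ) * Complex.I) *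
              (((∑ r, a ℓ r * b r : ℕ) : ℂ) / (M : ℂ) + (ξ ℓ : ℂ))) := by
  have hM0 : M ≠ 0 := by omega
  refine ⟨fun ℓ => OVFourier.phaseError M q (a ℓ) b,
    fun ℓ => OVFourier.abs_phaseError_le (by omega) (ha ℓ) hb, sum_congr rfl fun ℓ _ => ?_⟩
  obtain ⟨U, hU⟩ := OVFourier.sum_phaseTerm_eq (a := a ℓ) (b := b) hM0 hq
  rw [OVFourier.freqC_mul_timeC_div hM0, hU]
  push_cast
  exact Complex.exp_neg_two_pi_I_mul_add_natCast _ U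
end
end

section
/- Pairing cancellation at the lowest common ancestor: let n be a power of two, let f, f' ∈ [n] with f' − f ≡ 2^L (mod 2^{L+1}) for some level L, and let A be a finite set of levels with L ∈ A. Then Σ_{S ⊆ A} e^{2πi(f'−f)·Σ_{ℓ∈S} 2^{-(ℓ+1)}} = 0. -/
/-!
Writing `exp (c ∑_{ℓ∈S} aₗ) = ∏_{ℓ∈S} exp (c aₗ)`, the sum over all subsets of `A`
factors as `∏_{ℓ∈A} (1 + exp (c aₗ))`. For `d ≡ 2^L (mod 2^(L+1))` the factor at `ℓ = L`
is `1 + exp (π i d / 2^L) = 1 + exp (π i · odd) = 0`.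
-/

open Complex Finset

theorem sum_powerset_exp_mul_sum_eq_prod {ι : Type*} (A : Finset ι) (c : ℂ) (a : ι → ℂ) :
    ∑ S ∈ A.powerset, exp (c * ∑ ℓ ∈ S, a ℓ)
      = ∏ ℓ ∈ A, (1 + exp (c * a ℓ)) := by
  rw [prod_one_add]
  refine sum_congr rfl fun S _ => ?_
  rw [mul_sum, exp_sum]

theorem exp_two_pi_I_mul_div_two_pow_succ_eq_neg_one {d : ℤ} {L : ℕ}
    (hd : d ≡ 2 ^ L [ZMOD 2 ^ (L + 1)]) :
    exp (2 * Real.pi * I * d * ((2 : ℂ) ^ (L + 1))⁻¹) = -1 := by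
  obtain ⟨k, hk⟩ := hd.symm.dvd
  have hd' : (d : ℂ) = 2 ^ L + 2 ^ (L + 1) * k := by
    exact_mod_cast (show d = 2 ^ L + 2 ^ (L + 1) * k by linarith)
  have harg :
      2 * Real.pi * I * d * ((2 : ℂ) ^ (L + 1))⁻¹ = Real.pi * I + k * (2 * Real.pi * I) := by
    rw [hd']
    field_simp
    ring
  rw [harg, exp_add, exp_int_mul_two_pi_mul_I, mul_one, exp_pi_mul_I]

/-- Pairing cancellation at the lowest common ancestor: let `f, f'` be integers with
`f' − f ≡ 2^L (mod 2^{L+1})` for some level `L`, and let `A` be a finite set of levels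
with `L ∈ A`.  Then `∑_{S ⊆ A} e^{2πi (f'−f) ∑_{ℓ ∈ S} 2^{−(ℓ+1)}} = 0`. -/
theorem stmt_18 (f f' : ℤ) (L : ℕ) (hmod : f' - f ≡ 2 ^ L [ZMOD 2 ^ (L + 1)])
    (A : Finset ℕ) (hL : L ∈ A) :
    ∑ S ∈ A.powerset,
        Complex.exp (2 * (Real.pi : ℂ) * Complex.I * ((f' : ℂ) - (f : ℂ)) *
          ((∑ ℓ ∈ S, ((2 : ℝ) ^ (ℓ + 1))⁻¹ : ℝ) : ℂ)) = 0 := by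
  push_cast
  rw [← Int.cast_sub, sum_powerset_exp_mul_sum_eq_prod]
  refine prod_eq_zero hL ?_
  rw [exp_two_pi_I_mul_div_two_pow_succ_eq_neg_one hmod, add_neg_cancel]
end
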